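/- arXiv:1901.11311 — 4 statements merged into one kernel-verified Lean document; each statement's English description precedes it below -/
import Mathlib

section
/- (Laplace evaluation identity) For any C¹ function f : ℝ → ℝ such that f and f' are integrable against the Laplace density, and for any x ∈ ℝ and a > 0: f(x) = E_{z ∼ Laplace(x,a)}[ f(z) + a·f'(z)·sign(x−z) ], where the Laplace(x,a) density is exp(−|x−z|/a)/(2a). -/
/-!
On `z < x` the Laplace integrand is the derivative of `a e^{(z-x)/a} f(z)`, and on `z > x` that of
`-a e^{(x-z)/a} f(z)`. Both antiderivatives vanish at infinity and tend to `a f(x)` in absolute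
value at `x`, so each half line contributes `a f(x)`; dividing by the normalisation `2a` gives
`f(x)`. Both half lines are handled by the same computation, with `a` replaced by `-a` on the right.
-/

open MeasureTheory Filter Set Real Topology

section

variable {a x : ℝ} {f f' : ℝ → ℝ}

theorem hasDerivAt_mul_exp_sub_div_mul (ha : a ≠ 0) {z : ℝ} (hf : HasDerivAt f (f' z) z) :
    HasDerivAt (fun z => a * exp ((z - x) / a) * f z)
      (exp ((z - x) / a) * (f z + a * f' z)) z := by
  have hexp : HasDerivAt (fun z => a * exp ((z - x) / a)) (a * (exp ((z - x) / a) * (1 / a))) z :=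
    (((hasDerivAt_id z).sub_const x).div_const a).exp.const_mul a
  refine (hexp.mul hf).congr_deriv ?_
  field_simp

theorem integral_Iio_exp_sub_div_mul_add_mul_deriv (ha : a ≠ 0) (hf : ∀ z, HasDerivAt f (f' z) z)
    (hint : IntegrableOn (fun z => exp ((z - x) / a) * (f z + a * f' z)) (Iio x))
    (hlim : Tendsto (fun z => exp ((z - x) / a) * f z) atBot (𝓝 0)) :
    ∫ z in Iio x, exp ((z - x) / a) * (f z + a * f' z) = a * f x := by
  have hlim' : Tendsto (fun z => a * exp ((z - x) / a) * f z) atBot (𝓝 0) := by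
    simpa only [mul_zero, mul_assoc] using hlim.const_mul a
  rw [← integral_Iic_eq_integral_Iio, integral_Iic_of_hasDerivAt_of_tendsto'
    (fun z _ => hasDerivAt_mul_exp_sub_div_mul ha (hf z))
    ((integrableOn_Iic_iff_integrableOn_Iio).mpr hint) hlim']
  simp

theorem integral_Ioi_exp_sub_div_mul_add_mul_deriv (ha : a ≠ 0) (hf : ∀ z, HasDerivAt f (f' z) z)
    (hint : IntegrableOn (fun z => exp ((z - x) / a) * (f z + a * f' z)) (Ioi x))
    (hlim : Tendsto (fun z => exp ((z - x) / a) * f z) atTop (𝓝 0)) :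
    ∫ z in Ioi x, exp ((z - x) / a) * (f z + a * f' z) = -(a * f x) := by
  have hlim' : Tendsto (fun z => a * exp ((z - x) / a) * f z) atTop (𝓝 0) := by
    simpa only [mul_zero, mul_assoc] using hlim.const_mul a
  rw [integral_Ioi_of_hasDerivAt_of_tendsto'
    (fun z _ => hasDerivAt_mul_exp_sub_div_mul ha (hf z)) hint hlim']
  simp

theorem exp_neg_abs_sub_div_of_le {z : ℝ} (h : z ≤ x) :
    exp (-|x - z| / a) = exp ((z - x) / a) := by
  rw [abs_of_nonneg (sub_nonneg.mpr h), neg_sub]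

theorem exp_neg_abs_sub_div_of_ge {z : ℝ} (h : x ≤ z) :
    exp (-|x - z| / a) = exp ((z - x) / -a) := by
  rw [abs_of_nonpos (sub_nonpos.mpr h), neg_neg, div_neg, ← neg_div, neg_sub]

noncomputable def laplaceIntegrand (a x : ℝ) (f f' : ℝ → ℝ) (z : ℝ) : ℝ :=
  exp (-|x - z| / a) * (f z + a * f' z * Real.sign (x - z))

theorem laplaceIntegrand_eqOn_Iio :
    EqOn (laplaceIntegrand a x f f') (fun z => exp ((z - x) / a) * (f z + a * f' z)) (Iio x) := by
  intro z hz
  simp only [laplaceIntegrand, exp_neg_abs_sub_div_of_le (le_of_lt hz),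
    sign_of_pos (sub_pos.mpr hz), mul_one]

theorem laplaceIntegrand_eqOn_Ioi :
    EqOn (laplaceIntegrand a x f f') (fun z => exp ((z - x) / -a) * (f z + -a * f' z))
      (Ioi x) := by
  intro z hz
  simp only [laplaceIntegrand, exp_neg_abs_sub_div_of_ge (le_of_lt hz),
    sign_of_neg (sub_neg.mpr hz)]
  ring

theorem integrableOn_Iio_laplaceIntegrand
    (hint₁ : IntegrableOn (fun z => exp (-|x - z| / a) * f z) (Iio x))
    (hint₂ : IntegrableOn (fun z => exp (-|x - z| / a) * f' z) (Iio x)) :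
    IntegrableOn (laplaceIntegrand a x f f') (Iio x) :=
  (hint₁.add (hint₂.const_mul a)).congr_fun (fun z (hz : z < x) => by
    simp only [Pi.add_apply, laplaceIntegrand, sign_of_pos (sub_pos.mpr hz)]; ring)
    measurableSet_Iio

theorem integrableOn_Ioi_laplaceIntegrand
    (hint₁ : IntegrableOn (fun z => exp (-|x - z| / a) * f z) (Ioi x))
    (hint₂ : IntegrableOn (fun z => exp (-|x - z| / a) * f' z) (Ioi x)) :
    IntegrableOn (laplaceIntegrand a x f f') (Ioi x) :=
  (hint₁.sub (hint₂.const_mul a)).congr_fun (fun z (hz : x < z) => by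
    simp only [Pi.sub_apply, laplaceIntegrand, sign_of_neg (sub_neg.mpr hz)]; ring)
    measurableSet_Ioi

theorem integral_Iio_laplaceIntegrand (ha : a ≠ 0) (hf : ∀ z, HasDerivAt f (f' z) z)
    (hint : IntegrableOn (laplaceIntegrand a x f f') (Iio x))
    (hdecay : Tendsto (fun z => exp (-|x - z| / a) * f z) atBot (𝓝 0)) :
    ∫ z in Iio x, laplaceIntegrand a x f f' z = a * f x := by
  rw [setIntegral_congr_fun measurableSet_Iio laplaceIntegrand_eqOn_Iio]
  refine integral_Iio_exp_sub_div_mul_add_mul_deriv ha hf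
    (hint.congr_fun laplaceIntegrand_eqOn_Iio measurableSet_Iio) (hdecay.congr' ?_)
  filter_upwards [eventually_le_atBot x] with z hz
  rw [exp_neg_abs_sub_div_of_le hz]

theorem integral_Ioi_laplaceIntegrand (ha : a ≠ 0) (hf : ∀ z, HasDerivAt f (f' z) z)
    (hint : IntegrableOn (laplaceIntegrand a x f f') (Ioi x))
    (hdecay : Tendsto (fun z => exp (-|x - z| / a) * f z) atTop (𝓝 0)) :
    ∫ z in Ioi x, laplaceIntegrand a x f f' z = a * f x := by
  rw [setIntegral_congr_fun measurableSet_Ioi laplaceIntegrand_eqOn_Ioi,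
    integral_Ioi_exp_sub_div_mul_add_mul_deriv (neg_ne_zero.mpr ha) hf
      (hint.congr_fun laplaceIntegrand_eqOn_Ioi measurableSet_Ioi) (hdecay.congr' ?_), neg_mul,
    neg_neg]
  filter_upwards [eventually_ge_atTop x] with z hz
  rw [exp_neg_abs_sub_div_of_ge hz]

end

/-- Laplace evaluation identity: for a C¹ function `f` integrable (together with
its derivative) against the Laplace density,
`f(x) = E_{z ∼ Laplace(x,a)}[f(z) + a·f'(z)·sign(x-z)]`. -/
theorem laplace_evaluation_identity
    (a : ℝ) (ha : 0 < a) (x : ℝ)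
    (f : ℝ → ℝ) (hf : ContDiff ℝ 1 f)
    (hint₁ : Integrable (fun z => Real.exp (-|x - z| / a) * f z))
    (hint₂ : Integrable (fun z => Real.exp (-|x - z| / a) * deriv f z))
    (hdecayTop : Filter.Tendsto (fun z => Real.exp (-|x - z| / a) * f z)
      Filter.atTop (nhds 0))
    (hdecayBot : Filter.Tendsto (fun z => Real.exp (-|x - z| / a) * f z)
      Filter.atBot (nhds 0)) :
    f x = ∫ z, (Real.exp (-|x - z| / a) / (2 * a)) *
        (f z + a * deriv f z * Real.sign (x - z)) := by
  have hf' : ∀ z, HasDerivAt f (deriv f z) z :=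
    fun z => (hf.differentiable one_ne_zero z).hasDerivAt
  have hintL := integrableOn_Iio_laplaceIntegrand hint₁.integrableOn hint₂.integrableOn
  have hintR := integrableOn_Ioi_laplaceIntegrand hint₁.integrableOn hint₂.integrableOn
  calc f x = ((∫ z in Iio x, laplaceIntegrand a x f (deriv f) z) +
        ∫ z in Ioi x, laplaceIntegrand a x f (deriv f) z) / (2 * a) := by
        rw [integral_Iio_laplaceIntegrand ha.ne' hf' hintL hdecayBot,
          integral_Ioi_laplaceIntegrand ha.ne' hf' hintR hdecayTop]
        field_simp
        ring
    _ = (∫ z, laplaceIntegrand a x f (deriv f) z) / (2 * a) := by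
        rw [← integral_Iic_eq_integral_Iio, intervalIntegral.integral_Iic_add_Ioi
          ((integrableOn_Iic_iff_integrableOn_Iio).mpr hintL) hintR]
    _ = _ := by
        rw [← integral_div]
        simp only [laplaceIntegrand, div_mul_eq_mul_div]
end

section
/- (Bounded-interval integral representation with boundary terms) Let a > 0, f : [−1,1] → ℝ be C¹, and set w(x,z) = (f(z)+a f'(z))·Pk_a(z,x) where Pk_a(z,x) = (1+sign(x−z)·tanh((1+sign(x−z)z)/a))·k_a(z,x). Then for all x ∈ (−1,1): f(x) = ∫_{−1}^{1} w(x,z) dz + a·f(−1)·k_a(x,−1) − a·f(1)·k_a(x,1). -/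
/-!
On either side of `x` the kernel `Pk_a(·, x)` is a constant multiple of `exp ((z ± 1) / a)`, so
`(f + a f') Pk_a(·, x)` is the derivative of a constant multiple of `f(z) exp ((z ± 1) / a)` there.
Integrating over `[-1, x]` and `[x, 1]` leaves boundary values: those at `±1` are cancelled by
the boundary terms, and those at `x` add up to `f x` because
`cosh p · exp q - cosh q · exp (-p) = sinh (p + q)`.
-/

open Real Set MeasureTheory intervalIntegral

theorem Real.one_add_tanh (t : ℝ) : 1 + tanh t = exp t / cosh t := by
  rw [tanh_eq_sinh_div_cosh, eq_div_iff (cosh_pos t).ne', add_mul, one_mul,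
    div_mul_cancel₀ _ (cosh_pos t).ne', cosh_add_sinh]

theorem Real.one_sub_tanh (t : ℝ) : 1 - tanh t = exp (-t) / cosh t := by
  rw [tanh_eq_sinh_div_cosh, eq_div_iff (cosh_pos t).ne', sub_mul, one_mul,
    div_mul_cancel₀ _ (cosh_pos t).ne', cosh_sub_sinh]

theorem Real.cosh_mul_exp_sub_cosh_mul_exp_neg (p q : ℝ) :
    cosh p * exp q - cosh q * exp (-p) = sinh (p + q) := by
  rw [cosh_eq, cosh_eq, sinh_eq, exp_add, neg_add, exp_add]
  ring

theorem intervalIntegrable_add_mul_mul_exp {f f' : ℝ → ℝ} {α β : ℝ} (hαβ : α ≤ β)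
    (hf : ContinuousOn f (Icc α β)) (hf' : IntervalIntegrable f' volume α β) (a b : ℝ) :
    IntervalIntegrable (fun z => (f z + a * f' z) * exp ((z + b) / a)) volume α β :=
  ((hf.intervalIntegrable_of_Icc hαβ).add (hf'.const_mul a)).mul_continuousOn (by fun_prop)

theorem integral_add_mul_deriv_mul_exp {f f' : ℝ → ℝ} {a b α β : ℝ} (ha : a ≠ 0)
    (hαβ : α ≤ β) (hf : ContinuousOn f (Icc α β))
    (hderiv : ∀ z ∈ Ioo α β, HasDerivAt f (f' z) z) (hf' : IntervalIntegrable f' volume α β) :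
    ∫ z in α..β, (f z + a * f' z) * exp ((z + b) / a) =
      a * (f β * exp ((β + b) / a) - f α * exp ((α + b) / a)) := by
  have hexp : ∀ z, HasDerivAt (fun t => exp ((t + b) / a)) (exp ((z + b) / a) / a) z := fun z => by
    simpa [div_eq_mul_inv, mul_comm] using
      (((hasDerivAt_id z).add_const b).div_const a).exp
  have hF : ∀ z ∈ Ioo α β, HasDerivAt (fun t => a * (f t * exp ((t + b) / a)))
      ((f z + a * f' z) * exp ((z + b) / a)) z := fun z hz =>
    (((hderiv z hz).mul (hexp z)).const_mul a).congr_deriv (by field_simp; ring)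
  rw [integral_eq_sub_of_hasDerivAt_of_le hαβ (by fun_prop) hF
    (intervalIntegrable_add_mul_mul_exp hαβ hf hf' a b)]
  ring

/-- The Green's function of `1 - a² d²/dx²` on `[-1, 1]` with Neumann boundary conditions. -/
noncomputable def greenKernel (a z x : ℝ) : ℝ :=
  cosh ((1 + min z x) / a) * cosh ((1 - max z x) / a) / (a * sinh (2 / a))

noncomputable def pKernel (a z x : ℝ) : ℝ :=
  (1 + Real.sign (x - z) * tanh ((1 + Real.sign (x - z) * z) / a)) * greenKernel a z x

theorem greenKernel_neg_one {a x : ℝ} (hx : -1 ≤ x) :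
    greenKernel a x (-1) = cosh ((1 - x) / a) / (a * sinh (2 / a)) := by
  simp [greenKernel, min_eq_right hx, max_eq_left hx]

theorem greenKernel_one {a x : ℝ} (hx : x ≤ 1) :
    greenKernel a x 1 = cosh ((1 + x) / a) / (a * sinh (2 / a)) := by
  simp [greenKernel, min_eq_left hx, max_eq_right hx]

theorem pKernel_of_lt {a z x : ℝ} (hzx : z < x) :
    pKernel a z x = cosh ((1 - x) / a) / (a * sinh (2 / a)) * exp ((z + 1) / a) := by
  rw [pKernel, greenKernel, Real.sign_of_pos (sub_pos.2 hzx), one_mul, one_add_tanh,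
    min_eq_left hzx.le, max_eq_right hzx.le, add_comm z]
  field_simp [(cosh_pos ((1 + z) / a)).ne']

theorem pKernel_of_gt {a z x : ℝ} (hxz : x < z) :
    pKernel a z x = cosh ((1 + x) / a) / (a * sinh (2 / a)) * exp ((z + -1) / a) := by
  rw [pKernel, greenKernel, Real.sign_of_neg (sub_neg.2 hxz), neg_one_mul, neg_one_mul,
    ← sub_eq_add_neg, ← sub_eq_add_neg, one_sub_tanh, min_eq_right hxz.le, max_eq_left hxz.le,
    show -((1 - z) / a) = (z + -1) / a by ring]
  field_simp [(cosh_pos ((1 - z) / a)).ne']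

theorem integral_mul_pKernel {f f' : ℝ → ℝ} {a x : ℝ} (ha : a ≠ 0) (hx : x ∈ Icc (-1) 1)
    (hf : ContinuousOn f (Icc (-1) 1)) (hderiv : ∀ z ∈ Ioo (-1) 1, HasDerivAt f (f' z) z)
    (hf' : IntervalIntegrable f' volume (-1) 1) :
    ∫ z in (-1)..1, (f z + a * f' z) * pKernel a z x =
      cosh ((1 - x) / a) / sinh (2 / a) * (f x * exp ((x + 1) / a) - f (-1)) +
        cosh ((1 + x) / a) / sinh (2 / a) * (f 1 - f x * exp ((x + -1) / a)) := by
  obtain ⟨hx₁, hx₂⟩ := hx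
  set c₁ := cosh ((1 - x) / a) / (a * sinh (2 / a))
  set c₂ := cosh ((1 + x) / a) / (a * sinh (2 / a))
  have hL : EqOn (fun z => (f z + a * f' z) * pKernel a z x)
      (fun z => c₁ * ((f z + a * f' z) * exp ((z + 1) / a))) (uIoo (-1) x) := fun z hz => by
    rw [uIoo_of_le hx₁] at hz
    simp only [pKernel_of_lt hz.2]
    ring
  have hR : EqOn (fun z => (f z + a * f' z) * pKernel a z x)
      (fun z => c₂ * ((f z + a * f' z) * exp ((z + -1) / a))) (uIoo x 1) := fun z hz => by
    rw [uIoo_of_le hx₂] at hz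
    simp only [pKernel_of_gt hz.1]
    ring
  have hfL := hf.mono (Icc_subset_Icc le_rfl hx₂)
  have hfR := hf.mono (Icc_subset_Icc hx₁ le_rfl)
  have hf'L : IntervalIntegrable f' volume (-1) x := hf'.mono_set (by
    rw [uIcc_of_le hx₁, uIcc_of_le (by norm_num)]; exact Icc_subset_Icc le_rfl hx₂)
  have hf'R : IntervalIntegrable f' volume x 1 := hf'.mono_set (by
    rw [uIcc_of_le hx₂, uIcc_of_le (by norm_num)]; exact Icc_subset_Icc hx₁ le_rfl)
  rw [← integral_add_adjacent_intervals
    (((intervalIntegrable_add_mul_mul_exp hx₁ hfL hf'L a 1).const_mul c₁).congr_uIoo hL.symm)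
    (((intervalIntegrable_add_mul_mul_exp hx₂ hfR hf'R a (-1)).const_mul c₂).congr_uIoo hR.symm),
    integral_congr_uIoo hL, integral_congr_uIoo hR, intervalIntegral.integral_const_mul,
    intervalIntegral.integral_const_mul,
    integral_add_mul_deriv_mul_exp ha hx₁ hfL (fun z hz => hderiv z ⟨hz.1, hz.2.trans_le hx₂⟩) hf'L,
    integral_add_mul_deriv_mul_exp ha hx₂ hfR (fun z hz => hderiv z ⟨hx₁.trans_lt hz.1, hz.2⟩) hf'R]
  simp only [c₁, c₂, neg_add_cancel, add_neg_cancel, zero_div, exp_zero, mul_one]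
  field_simp

theorem eq_integral_mul_pKernel_add_boundary {f f' : ℝ → ℝ} {a x : ℝ} (ha : a ≠ 0)
    (hx : x ∈ Icc (-1) 1) (hf : ContinuousOn f (Icc (-1) 1))
    (hderiv : ∀ z ∈ Ioo (-1) 1, HasDerivAt f (f' z) z) (hf' : IntervalIntegrable f' volume (-1) 1) :
    f x = (∫ z in (-1)..1, (f z + a * f' z) * pKernel a z x) +
      a * f (-1) * greenKernel a x (-1) - a * f 1 * greenKernel a x 1 := by
  have key : cosh ((1 - x) / a) * exp ((x + 1) / a) - cosh ((1 + x) / a) * exp ((x + -1) / a) =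
      sinh (2 / a) := by
    rw [add_comm 1 x, show (x + -1) / a = -((1 - x) / a) by ring,
      show 2 / a = (1 - x) / a + (x + 1) / a by ring]
    exact cosh_mul_exp_sub_cosh_mul_exp_neg _ _
  have hsinh : sinh (2 / a) ≠ 0 := by simpa using ha
  rw [integral_mul_pKernel ha hx hf hderiv hf', greenKernel_neg_one hx.1, greenKernel_one hx.2]
  field_simp
  linear_combination (-f x) * key

/-- Bounded-interval integral representation with boundary terms: for `f` C¹ on
`[-1,1]` and `x ∈ (-1,1)`,
`f(x) = ∫_{-1}^1 (f(z) + a f'(z))·Pk_a(z,x) dz + a·f(-1)·k_a(x,-1) - a·f(1)·k_a(x,1)`. -/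
theorem bounded_integral_representation
    (a : ℝ) (ha : 0 < a)
    (f : ℝ → ℝ) (hf : ContDiffOn ℝ 1 f (Set.Icc (-1) 1))
    (k : ℝ → ℝ → ℝ)
    (hk : k = fun z x => Real.cosh ((1 + min z x) / a) * Real.cosh ((1 - max z x) / a) /
      (a * Real.sinh (2 / a)))
    (Pk : ℝ → ℝ → ℝ)
    (hPk : Pk = fun z x =>
      (1 + Real.sign (x - z) * Real.tanh ((1 + Real.sign (x - z) * z) / a)) * k z x)
    (w : ℝ → ℝ → ℝ)
    (hw : w = fun x z => (f z + a * derivWithin f (Set.Icc (-1) 1) z) * Pk z x)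
    (x : ℝ) (hx : x ∈ Set.Ioo (-1 : ℝ) 1) :
    f x = (∫ z in (-1 : ℝ)..1, w x z) + a * f (-1) * k x (-1) - a * f 1 * k x 1 := by
  obtain rfl : k = greenKernel a := hk
  obtain rfl : Pk = pKernel a := hPk
  subst hw
  have hderiv : ∀ z ∈ Ioo (-1) 1, HasDerivAt f (derivWithin f (Icc (-1) 1) z) z := fun z hz =>
    (hf.differentiableOn one_ne_zero z (Ioo_subset_Icc_self hz)).hasDerivWithinAt.hasDerivAt
      (Icc_mem_nhds hz.1 hz.2)
  have hf' : ContinuousOn (derivWithin f (Icc (-1) 1)) (Icc (-1) 1) :=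
    hf.continuousOn_derivWithin (uniqueDiffOn_Icc (by norm_num)) le_rfl
  exact eq_integral_mul_pKernel_add_boundary ha.ne' (Ioo_subset_Icc_self hx) hf.continuousOn
    hderiv (hf'.intervalIntegrable_of_Icc (by norm_num))
end

section
/- (Jump identity for κ_a) Define r_a(z,x) = 1 + sign(x−z)·tanh((1+sign(x−z)·z)/a) and κ_a(z,x) = r_a(z,x)·k_a(z,x) for z ≠ x. Then for all x ∈ (−1,1) and a > 0: κ_a(x⁻,x) − κ_a(x⁺,x) = 1/a, where κ_a(x^±,x) are the one-sided limits as z → x^±. -/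
/-- Jump identity for `κ_a`: the difference of the one-sided limits of
`z ↦ κ_a(z,x)` at `z = x` equals `1/a`. -/
theorem kappa_jump_identity
    (a : ℝ) (ha : 0 < a)
    (k : ℝ → ℝ → ℝ)
    (hk : k = fun z x => Real.cosh ((1 + min z x) / a) * Real.cosh ((1 - max z x) / a) /
      (a * Real.sinh (2 / a)))
    (r : ℝ → ℝ → ℝ)
    (hr : r = fun z x => 1 + Real.sign (x - z) * Real.tanh ((1 + Real.sign (x - z) * z) / a))
    (κ : ℝ → ℝ → ℝ) (hκ : κ = fun z x => r z x * k z x)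
    (x : ℝ) (hx : x ∈ Set.Ioo (-1 : ℝ) 1) :
    ∃ Lm Lp : ℝ,
      Filter.Tendsto (fun z => κ z x) (nhdsWithin x (Set.Iio x)) (nhds Lm) ∧
      Filter.Tendsto (fun z => κ z x) (nhdsWithin x (Set.Ioi x)) (nhds Lp) ∧
      Lm - Lp = 1 / a := by
  have ha' : a ≠ 0 := ha.ne'
  have hsinh : Real.sinh (2 / a) > 0 := Real.sinh_pos_iff.mpr (by positivity)
  have htanh : Continuous Real.tanh := by
    rw [show Real.tanh = fun x => Real.sinh x / Real.cosh x from
      funext Real.tanh_eq_sinh_div_cosh]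
    exact Real.continuous_sinh.div Real.continuous_cosh fun x => (Real.cosh_pos x).ne'
  have hD : a * Real.sinh (2 / a) ≠ 0 := by positivity
  set D := a * Real.sinh (2 / a) with hDdef
  set p := (1 + x) / a with hp
  set m := (1 - x) / a with hm
  refine ⟨(1 + Real.tanh p) * (Real.cosh p * Real.cosh m / D),
          (1 - Real.tanh m) * (Real.cosh p * Real.cosh m / D), ?_, ?_, ?_⟩
  · have hcont : Filter.Tendsto
        (fun z => (1 + Real.tanh ((1 + z) / a)) *
          (Real.cosh ((1 + z) / a) * Real.cosh ((1 - x) / a) / D))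
        (nhds x) (nhds ((1 + Real.tanh p) * (Real.cosh p * Real.cosh m / D))) := by
      have h0 : Continuous fun z : ℝ => (1 + z) / a :=
        (continuous_const.add continuous_id).div_const a
      have : Continuous fun z : ℝ => (1 + Real.tanh ((1 + z) / a)) *
          (Real.cosh ((1 + z) / a) * Real.cosh ((1 - x) / a) / D) :=
        (continuous_const.add (htanh.comp h0)).mul
          (((Real.continuous_cosh.comp h0).mul continuous_const).div_const D)
      simpa [hp, hm] using this.tendsto x
    refine (hcont.mono_left nhdsWithin_le_nhds).congr' ?_
    filter_upwards [self_mem_nhdsWithin] with z hz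
    have hzx : z < x := hz
    have hs : Real.sign (x - z) = 1 := Real.sign_of_pos (by linarith)
    simp only [hκ, hr, hk, hs, min_eq_left hzx.le, max_eq_right hzx.le, ← hDdef]
    ring_nf
  · have hcont : Filter.Tendsto
        (fun z => (1 - Real.tanh ((1 - z) / a)) *
          (Real.cosh ((1 + x) / a) * Real.cosh ((1 - z) / a) / D))
        (nhds x) (nhds ((1 - Real.tanh m) * (Real.cosh p * Real.cosh m / D))) := by
      have h0 : Continuous fun z : ℝ => (1 - z) / a :=
        (continuous_const.sub continuous_id).div_const a
      have : Continuous fun z : ℝ => (1 - Real.tanh ((1 - z) / a)) *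
          (Real.cosh ((1 + x) / a) * Real.cosh ((1 - z) / a) / D) :=
        (continuous_const.sub (htanh.comp h0)).mul
          (((Real.continuous_cosh.comp continuous_const).mul (Real.continuous_cosh.comp h0)).div_const D)
      simpa [hp, hm] using this.tendsto x
    refine (hcont.mono_left nhdsWithin_le_nhds).congr' ?_
    filter_upwards [self_mem_nhdsWithin] with z hz
    have hzx : x < z := hz
    have hs : Real.sign (x - z) = -1 := Real.sign_of_neg (by linarith)
    simp only [hκ, hr, hk, hs, min_eq_right hzx.le, max_eq_left hzx.le, ← hDdef]
    ring_nf
  · have hcp : Real.cosh p ≠ 0 := (Real.cosh_pos _).ne'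
    have hcm : Real.cosh m ≠ 0 := (Real.cosh_pos _).ne'
    have key : Real.sinh p * Real.cosh m + Real.cosh p * Real.sinh m = Real.sinh (2 / a) := by
      rw [← Real.sinh_add]
      congr 1
      rw [hp, hm]
      field_simp
      ring
    have key2 : (Real.tanh p + Real.tanh m) * (Real.cosh p * Real.cosh m) =
        Real.sinh (2 / a) := by
      rw [Real.tanh_eq_sinh_div_cosh, Real.tanh_eq_sinh_div_cosh, ← key]
      field_simp
    have : (1 + Real.tanh p) * (Real.cosh p * Real.cosh m / D) -
        (1 - Real.tanh m) * (Real.cosh p * Real.cosh m / D) =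
        (Real.tanh p + Real.tanh m) * (Real.cosh p * Real.cosh m) / D := by ring
    rw [this, key2, hDdef, div_mul_eq_div_div_swap, div_self hsinh.ne', one_div]
end

section
/- (Compact-interval integration step) Let f : [−1,1] → ℝ be C¹ and a > 0, with κ_a as defined. Then ∫_{−1}^{1} ∂_z(f(z)·κ_a(z,x)) dz, computed as the sum of integrals over (−1,x) and (x,1), equals (1/a)·[ B_a(x)·f(1) + f(x) − B_a(−x)·f(−1) ], where B_a(x) = cosh((1+x)/a)/sinh(2/a). -/
/-!
Since `(1 ± tanh t) cosh t = e^{±t}`, the factor `r_a` turns `κ_a(·, x)` into a multiple of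
`e^{z/a}` on each side of `x`, so the fundamental theorem of calculus applies on `(-1, x)` and
`(x, 1)` separately. The boundary terms at `±1` give `B_a(±x)`, and the two boundary terms at `x`
differ by `(e^u cosh v - e^{-v} cosh u) / (a sinh (2/a)) = sinh (u + v) / (a sinh (2/a)) = 1/a`
with `u = (1 + x)/a`, `v = (1 - x)/a`.
-/

open MeasureTheory Set Real

theorem setIntegral_Ioo_deriv_of_eqOn {E : Type*} [NormedAddCommGroup E] [NormedSpace ℝ E]
    [CompleteSpace E] {F G : ℝ → E} {c d : ℝ} (hcd : c ≤ d) (hF : ContDiffOn ℝ 1 F (Icc c d))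
    (hGF : EqOn G F (Ioo c d)) :
    ∫ z in Ioo c d, deriv G z = F d - F c := by
  rw [setIntegral_congr_fun measurableSet_Ioo (hGF.deriv isOpen_Ioo),
    ← integral_Ioc_eq_integral_Ioo, ← intervalIntegral.integral_of_le hcd,
    intervalIntegral.integral_deriv_of_contDiffOn_Icc hF hcd]

theorem one_add_tanh_mul_cosh (t : ℝ) : (1 + tanh t) * cosh t = exp t := by
  rw [tanh_eq_sinh_div_cosh, add_mul, div_mul_cancel₀ _ (cosh_pos t).ne', one_mul, cosh_add_sinh]

theorem one_sub_tanh_mul_cosh (t : ℝ) : (1 - tanh t) * cosh t = exp (-t) := by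
  rw [tanh_eq_sinh_div_cosh, sub_mul, div_mul_cancel₀ _ (cosh_pos t).ne', one_mul, cosh_sub_sinh]

theorem exp_mul_cosh_sub_exp_neg_mul_cosh (u v : ℝ) :
    exp u * cosh v - exp (-v) * cosh u = sinh (u + v) := by
  simp only [cosh_eq, sinh_eq, exp_neg, neg_add, exp_add]
  field_simp
  ring

noncomputable def kappa (a z x : ℝ) : ℝ :=
  (1 + Real.sign (x - z) * tanh ((1 + Real.sign (x - z) * z) / a)) *
    (cosh ((1 + min z x) / a) * cosh ((1 - max z x) / a) / (a * sinh (2 / a)))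

theorem kappa_of_lt {a z x : ℝ} (h : z < x) :
    kappa a z x = exp ((1 + z) / a) * cosh ((1 - x) / a) / (a * sinh (2 / a)) := by
  rw [kappa, Real.sign_of_pos (sub_pos.2 h), one_mul, one_mul, min_eq_left h.le,
    max_eq_right h.le, ← one_add_tanh_mul_cosh]
  ring

theorem kappa_of_gt {a z x : ℝ} (h : x < z) :
    kappa a z x = exp (-((1 - z) / a)) * cosh ((1 + x) / a) / (a * sinh (2 / a)) := by
  rw [kappa, Real.sign_of_neg (sub_neg.2 h), neg_one_mul, neg_one_mul, ← sub_eq_add_neg,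
    ← sub_eq_add_neg, min_eq_right h.le, max_eq_left h.le, ← one_sub_tanh_mul_cosh]
  ring

theorem kappa_jump {a : ℝ} (ha : a ≠ 0) (x : ℝ) :
    exp ((1 + x) / a) * cosh ((1 - x) / a) / (a * sinh (2 / a)) -
      exp (-((1 - x) / a)) * cosh ((1 + x) / a) / (a * sinh (2 / a)) = 1 / a := by
  have hS : sinh (2 / a) ≠ 0 := sinh_ne_zero.2 (div_ne_zero two_ne_zero ha)
  rw [← sub_div, exp_mul_cosh_sub_exp_neg_mul_cosh, ← add_div, add_add_sub_cancel,
    one_add_one_eq_two]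
  field_simp

/-- Compact-interval integration step: for `f` C¹ on `[-1,1]` and `x ∈ (-1,1)`,
the sum of `∫ ∂_z(f(z)·κ_a(z,x)) dz` over `(-1,x)` and `(x,1)` equals
`(1/a)·(B_a(x)·f(1) + f(x) - B_a(-x)·f(-1))`. -/
theorem compact_interval_integration_step
    (a : ℝ) (ha : 0 < a)
    (f : ℝ → ℝ) (hf : ContDiffOn ℝ 1 f (Set.Icc (-1) 1))
    (k : ℝ → ℝ → ℝ)
    (hk : k = fun z x => Real.cosh ((1 + min z x) / a) * Real.cosh ((1 - max z x) / a) /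
      (a * Real.sinh (2 / a)))
    (r : ℝ → ℝ → ℝ)
    (hr : r = fun z x => 1 + Real.sign (x - z) * Real.tanh ((1 + Real.sign (x - z) * z) / a))
    (κ : ℝ → ℝ → ℝ) (hκ : κ = fun z x => r z x * k z x)
    (B : ℝ → ℝ) (hB : B = fun x => Real.cosh ((1 + x) / a) / Real.sinh (2 / a))
    (x : ℝ) (hx : x ∈ Set.Ioo (-1 : ℝ) 1) :
    (∫ z in Set.Ioo (-1 : ℝ) x, deriv (fun z' => f z' * κ z' x) z) +
      (∫ z in Set.Ioo x (1 : ℝ), deriv (fun z' => f z' * κ z' x) z) =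
      (1 / a) * (B x * f 1 + f x - B (-x) * f (-1)) := by
  rw [show κ = kappa a by subst hk hr hκ; rfl, hB]
  obtain ⟨hx₁, hx₂⟩ := hx
  have hleft := setIntegral_Ioo_deriv_of_eqOn hx₁.le (G := fun z => f z * kappa a z x)
    (F := fun z => f z * (exp ((1 + z) / a) * cosh ((1 - x) / a) / (a * sinh (2 / a))))
    ((hf.mono (Icc_subset_Icc le_rfl hx₂.le)).mul (by fun_prop))
    (fun z hz => by simp only [kappa_of_lt hz.2])
  have hright := setIntegral_Ioo_deriv_of_eqOn hx₂.le (G := fun z => f z * kappa a z x)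
    (F := fun z => f z * (exp (-((1 - z) / a)) * cosh ((1 + x) / a) / (a * sinh (2 / a))))
    ((hf.mono (Icc_subset_Icc hx₁.le le_rfl)).mul (by fun_prop))
    (fun z hz => by simp only [kappa_of_gt hz.1])
  rw [hleft, hright]
  simp only [add_neg_cancel, sub_self, zero_div, neg_zero, exp_zero, one_mul, ← sub_eq_add_neg]
  linear_combination f x * kappa_jump ha.ne' x
end
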